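/- Let G be a finite connected 2-γ'MB-critical graph with a cut-vertex x such that G − x has exactly two connected components C₁ and C₂, where x is adjacent in G to every vertex of C₂ and C₂ contains at least two universal vertices of itself. Then C₂ is isomorphic to H_m for some m ≥ 2. -/
import Mathlib


/-- `D` is a dominating set of `G`: every vertex not in `D` has a neighbor in `D`. -/
def Dominating {V : Type*} (G : SimpleGraph V) (D : Set V) : Prop :=
  ∀ v, v ∉ D → ∃ d ∈ D, G.Adj d v

/-- Dominator wins the S-game on `G` within one move. -/
def WinsWithin1 {V : Type*} (G : SimpleGraph V) : Prop :=
  ∀ s₁ : V, ∃ d₁, d₁ ≠ s₁ ∧ Dominating G {d₁}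

/-- Dominator wins the S-game on `G` within two moves. -/
def WinsWithin2 {V : Type*} (G : SimpleGraph V) : Prop :=
  ∀ s₁ : V, ∃ d₁, d₁ ≠ s₁ ∧
    (Dominating G {d₁} ∨
      ∀ s₂, s₂ ∉ ({s₁, d₁} : Set V) →
        ∃ d₂, d₂ ∉ ({s₁, d₁, s₂} : Set V) ∧ Dominating G {d₁, d₂})

/-- `γ'MB(G) = 2`: Dominator wins the S-game within two moves but not within one. -/
def MBPrimeEqTwo {V : Type*} (G : SimpleGraph V) : Prop :=
  WinsWithin2 G ∧ ¬ WinsWithin1 G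

/-- `G` is `2`-`γ'MB`-critical: `γ'MB(G) = 2` and for every edge `e`, Dominator does not
win the S-game on `G - e` within two moves. -/
def Critical2 {V : Type*} (G : SimpleGraph V) : Prop :=
  MBPrimeEqTwo G ∧ ∀ u v : V, G.Adj u v → ¬ WinsWithin2 (G.deleteEdges {s(u, v)})

/-- The graph `H_m`, the join of `K₂` with the complement of `K_{m-2}`: the first two
vertices are adjacent to everything, the remaining vertices form an independent set.
(`H₀` is the null graph, `H₂ = K₂`.) -/
def HGraph (m : ℕ) : SimpleGraph (Fin m) :=
  SimpleGraph.fromRel (fun u _ => u.val < 2)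

/-- `v` is a universal vertex of the subgraph of `G` induced on `C`:
`v ∈ C` and `v` is adjacent in `G` to every other vertex of `C`. -/
def UnivIn {V : Type*} (G : SimpleGraph V) (C : Set V) (v : V) : Prop :=
  v ∈ C ∧ ∀ u ∈ C, u ≠ v → G.Adj v u

/-- `G - x` has exactly two connected components, with vertex sets `C₁` and `C₂`. -/
def IsTwoComponents {V : Type*} (G : SimpleGraph V) (x : V) (C₁ C₂ : Set V) : Prop :=
  C₁.Nonempty ∧ C₂.Nonempty ∧ Disjoint C₁ C₂ ∧ C₁ ∪ C₂ = {x}ᶜ ∧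
    (G.induce C₁).Connected ∧ (G.induce C₂).Connected ∧
    ∀ u ∈ C₁, ∀ v ∈ C₂, ¬ G.Adj u v

theorem stmt6 {V : Type*} [Fintype V] (G : SimpleGraph V) (hconn : G.Connected)
    (hcrit : Critical2 G) (x : V) (C₁ C₂ : Set V)
    (hcomp : IsTwoComponents G x C₁ C₂)
    (hdom : ∀ v ∈ C₂, G.Adj x v)
    (huniv : ∃ v w, v ≠ w ∧ UnivIn G C₂ v ∧ UnivIn G C₂ w) :
    ∃ m : ℕ, 2 ≤ m ∧ Nonempty ((G.induce C₂) ≃g HGraph m) := by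
  classical
  obtain ⟨⟨hW2, hnW1⟩, hcritE⟩ := hcrit
  obtain ⟨hC₁ne, hC₂ne, hdisj, hunion, hconn1, hconn2, hnoadj⟩ := hcomp
  obtain ⟨v, w, hvw, ⟨hvC, hvU⟩, ⟨hwC, hwU⟩⟩ := huniv
  have hxC₂ : x ∉ C₂ := by
    intro h
    have hx : x ∈ C₁ ∪ C₂ := Or.inr h
    rw [hunion] at hx
    exact hx rfl
  have hxC₁ : x ∉ C₁ := by
    intro h
    have hx : x ∈ C₁ ∪ C₂ := Or.inl h
    rw [hunion] at hx
    exact hx rfl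
  have hmem : ∀ y : V, y ≠ x → y ∈ C₁ ∨ y ∈ C₂ := by
    intro y hy
    have : y ∈ C₁ ∪ C₂ := by rw [hunion]; exact hy
    exact this
  have hdd : ∀ {y : V}, y ∈ C₁ → y ∈ C₂ → False := by
    intro y h1 h2
    exact (Set.disjoint_left.mp hdisj h1) h2
  have hnoadj' : ∀ u ∈ C₂, ∀ c ∈ C₁, ¬ G.Adj u c := by
    intro u hu c hc h
    exact hnoadj c hc u hu h.symm
  have hxv : x ≠ v := by rintro rfl; exact hxC₂ hvC
  have hxw : x ≠ w := by rintro rfl; exact hxC₂ hwC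
  -- Key: a dominating pair avoiding x contains a universal vertex of C₁
  have keyPair : ∀ p q : V, p ≠ x → q ≠ x → Dominating G {p, q} →
      ∃ r ∈ ({p, q} : Set V), UnivIn G C₁ r := by
    intro p q hp hq hD
    have bothC₁ : ∀ p' q' : V, p' ∈ C₁ → q' ∈ C₁ → Dominating G {p', q'} → False := by
      intro p' q' hp' hq' hD'
      obtain ⟨c, hc⟩ := hC₂ne
      have hcD : c ∉ ({p', q'} : Set V) := by
        rintro (rfl | rfl)
        · exact hdd hp' hc
        · exact hdd hq' hc
      obtain ⟨d, hd, hadj⟩ := hD' c hcD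
      rcases hd with rfl | rfl
      · exact hnoadj d hp' c hc hadj
      · exact hnoadj d hq' c hc hadj
    have bothC₂ : ∀ p' q' : V, p' ∈ C₂ → q' ∈ C₂ → Dominating G {p', q'} → False := by
      intro p' q' hp' hq' hD'
      obtain ⟨c, hc⟩ := hC₁ne
      have hcD : c ∉ ({p', q'} : Set V) := by
        rintro (rfl | rfl)
        · exact hdd hc hp'
        · exact hdd hc hq'
      obtain ⟨d, hd, hadj⟩ := hD' c hcD
      rcases hd with rfl | rfl
      · exact hnoadj' d hp' c hc hadj
      · exact hnoadj' d hq' c hc hadj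
    have univOf : ∀ p' q' : V, p' ∈ C₁ → q' ∈ C₂ → Dominating G {p', q'} →
        UnivIn G C₁ p' := by
      intro p' q' hp' hq' hD'
      refine ⟨hp', ?_⟩
      intro u hu hup
      have huq : u ≠ q' := by rintro rfl; exact hdd hu hq'
      have huD : u ∉ ({p', q'} : Set V) := by
        rintro (rfl | rfl)
        · exact hup rfl
        · exact huq rfl
      obtain ⟨d, hd, hadj⟩ := hD' u huD
      rcases hd with rfl | rfl
      · exact hadj
      · exact absurd hadj (hnoadj' d hq' u hu)
    rcases hmem p hp with hp1 | hp2 <;> rcases hmem q hq with hq1 | hq2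
    · exact absurd hD (fun h => bothC₁ p q hp1 hq1 h)
    · exact ⟨p, Or.inl rfl, univOf p q hp1 hq2 hD⟩
    · refine ⟨q, Or.inr rfl, univOf q p hq1 hp2 ?_⟩
      intro c hc
      have : c ∉ ({p, q} : Set V) := by
        rintro (rfl | rfl)
        · exact hc (Or.inr rfl)
        · exact hc (Or.inl rfl)
      obtain ⟨d, hd, hadj⟩ := hD c this
      rcases hd with rfl | rfl
      · exact ⟨d, Or.inr rfl, hadj⟩
      · exact ⟨d, Or.inl rfl, hadj⟩
    · exact absurd hD (fun h => bothC₂ p q hp2 hq2 h)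
  -- a singleton dominating set must be {x}
  have singX : ∀ d : V, d ≠ x → Dominating G {d} → False := by
    intro d hdx hD
    rcases hmem d hdx with h1 | h2
    · obtain ⟨c, hc⟩ := hC₂ne
      have : c ∉ ({d} : Set V) := by rintro rfl; exact hdd h1 hc
      obtain ⟨e, he, hadj⟩ := hD c this
      rcases he with rfl
      exact hnoadj e h1 c hc hadj
    · obtain ⟨c, hc⟩ := hC₁ne
      have : c ∉ ({d} : Set V) := by rintro rfl; exact hdd hc h2
      obtain ⟨e, he, hadj⟩ := hD c this
      rcases he with rfl
      exact hnoadj' e h2 c hc hadj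
  -- existence of a universal vertex of C₁
  have hA : ∃ a, UnivIn G C₁ a := by
    obtain ⟨d₁, hd₁x, hd⟩ := hW2 x
    rcases hd with hsing | hpair
    · exact absurd hsing (fun h => singX d₁ hd₁x h)
    · have hs₂C : (if d₁ = v then w else v) ∈ C₂ := by
        split_ifs
        · exact hwC
        · exact hvC
      have hs₂d : (if d₁ = v then w else v) ≠ d₁ := by
        split_ifs with h
        · subst h; exact fun hh => hvw hh.symm
        · exact fun hh => h hh.symm
      obtain ⟨d₂, hd₂, hDom⟩ := hpair (if d₁ = v then w else v) (by
        intro hmem'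
        rcases hmem' with h | h
        · exact hxC₂ (h ▸ hs₂C)
        · rw [Set.mem_singleton_iff] at h
          exact hs₂d h)
      have hd₂x : d₂ ≠ x := by
        intro h
        exact hd₂ (by rw [h]; exact Set.mem_insert _ _)
      obtain ⟨r, _, hrU⟩ := keyPair d₁ d₂ hd₁x hd₂x hDom
      exact ⟨r, hrU⟩
  -- Independence of C₂ \ {v, w}
  have hind : ∀ u₁ ∈ C₂, ∀ u₂ ∈ C₂, u₁ ≠ v → u₁ ≠ w → u₂ ≠ v → u₂ ≠ w →
      ¬ G.Adj u₁ u₂ := by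
    intro u₁ hu₁ u₂ hu₂ h1v h1w h2v h2w hadj
    refine hcritE u₁ u₂ hadj ?_
    set G' := G.deleteEdges {s(u₁, u₂)} with hG'
    have hxu₁ : x ≠ u₁ := by rintro rfl; exact hxC₂ hu₁
    have hxu₂ : x ≠ u₂ := by rintro rfl; exact hxC₂ hu₂
    have hadj' : ∀ c d : V, G.Adj c d → c ≠ u₁ → c ≠ u₂ → G'.Adj c d := by
      intro c d h hc1 hc2
      rw [hG', SimpleGraph.deleteEdges_adj]
      refine ⟨h, ?_⟩
      simp only [Set.mem_singleton_iff, Sym2.eq_iff]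
      rintro (⟨h1, h2⟩ | ⟨h1, h2⟩)
      · exact hc1 h1
      · exact hc2 h1
    have L3 : Dominating G {x} → Dominating G' {x} := by
      intro hD c hc
      obtain ⟨d, hd, h⟩ := hD c hc
      rcases hd with rfl
      exact ⟨d, rfl, hadj' d c h hxu₁ hxu₂⟩
    have L2 : ∀ z, Dominating G {x, z} → Dominating G' {x, z} := by
      intro z hD c hc
      by_cases hcC : c ∈ C₂
      · exact ⟨x, Or.inl rfl, hadj' x c (hdom c hcC) hxu₁ hxu₂⟩
      · obtain ⟨d, hd, h⟩ := hD c hc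
        refine ⟨d, hd, ?_⟩
        have hc1 : c ≠ u₁ := by rintro rfl; exact hcC hu₁
        have hc2 : c ≠ u₂ := by rintro rfl; exact hcC hu₂
        exact (hadj' c d h.symm hc1 hc2).symm
    have L1 : ∀ a, UnivIn G C₁ a → ∀ q, (q = x ∨ q = v ∨ q = w) →
        Dominating G' {a, q} := by
      intro a haUn q hq c hc
      obtain ⟨haC, haU⟩ := haUn
      have hau₁ : a ≠ u₁ := by rintro rfl; exact hdd haC hu₁
      have hau₂ : a ≠ u₂ := by rintro rfl; exact hdd haC hu₂
      have hqC : ∀ u ∈ C₂, u ≠ q → G'.Adj q u := by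
        intro u hu hneq
        rcases hq with rfl | rfl | rfl
        · exact hadj' q u (hdom u hu) hxu₁ hxu₂
        · exact hadj' q u (hvU u hu hneq) (fun h => h1v h.symm) (fun h => h2v h.symm)
        · exact hadj' q u (hwU u hu hneq) (fun h => h1w h.symm) (fun h => h2w h.symm)
      rcases eq_or_ne c x with rfl | hcx
      · have hq' : q ≠ c := by rintro rfl; exact hc (Or.inr rfl)
        rcases hq with rfl | rfl | rfl
        · exact absurd rfl hq'
        · exact ⟨q, Or.inr rfl, (hadj' c q (hdom q hvC) hxu₁ hxu₂).symm⟩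
        · exact ⟨q, Or.inr rfl, (hadj' c q (hdom q hwC) hxu₁ hxu₂).symm⟩
      · rcases hmem c hcx with h1 | h2
        · have hca : c ≠ a := by rintro rfl; exact hc (Or.inl rfl)
          exact ⟨a, Or.inl rfl, hadj' a c (haU c h1 hca) hau₁ hau₂⟩
        · have hcq : c ≠ q := by rintro rfl; exact hc (Or.inr rfl)
          exact ⟨q, Or.inr rfl, hqC c h2 hcq⟩
    -- now the strategy for G'
    intro s₁
    by_cases hex : ∃ a, UnivIn G C₁ a ∧ a ≠ s₁
    · obtain ⟨a, haU, has⟩ := hex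
      have hax : a ≠ x := by rintro rfl; exact hxC₁ haU.1
      have hav : a ≠ v := by rintro rfl; exact hdd haU.1 hvC
      have haw : a ≠ w := by rintro rfl; exact hdd haU.1 hwC
      refine ⟨a, has, Or.inr ?_⟩
      intro s₂ _
      by_cases h1 : x ≠ s₁ ∧ x ≠ s₂
      · refine ⟨x, ?_, L1 a haU x (Or.inl rfl)⟩
        rintro (h | h | h)
        · exact h1.1 h
        · exact hax h.symm
        · rw [Set.mem_singleton_iff] at h
          exact h1.2 h
      · by_cases h2 : v ≠ s₁ ∧ v ≠ s₂
        · refine ⟨v, ?_, L1 a haU v (Or.inr (Or.inl rfl))⟩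
          rintro (h | h | h)
          · exact h2.1 h
          · exact hav h.symm
          · rw [Set.mem_singleton_iff] at h
            exact h2.2 h
        · have h3 : w ≠ s₁ ∧ w ≠ s₂ := by
            push_neg at h1 h2
            constructor
            · rintro rfl
              have hx2 : x = s₂ := by
                rcases (by by_cases hh : x = w; exact Or.inl hh; exact Or.inr (h1 hh) :
                    x = w ∨ x = s₂) with hh | hh
                · exact absurd hh hxw
                · exact hh
              have hv2 : v = s₂ := by
                rcases (by by_cases hh : v = w; exact Or.inl hh; exact Or.inr (h2 hh) :
                    v = w ∨ v = s₂) with hh | hh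
                · exact absurd hh hvw
                · exact hh
              exact hxv (hx2.trans hv2.symm)
            · rintro rfl
              have hx1 : x = s₁ := by
                by_cases hh : x = s₁
                · exact hh
                · exact absurd (h1 hh) hxw
              have hv1 : v = s₁ := by
                by_cases hh : v = s₁
                · exact hh
                · exact absurd (h2 hh) hvw
              exact hxv (hx1.trans hv1.symm)
          refine ⟨w, ?_, L1 a haU w (Or.inr (Or.inr rfl))⟩
          rintro (h | h | h)
          · exact h3.1 h
          · exact haw h.symm
          · rw [Set.mem_singleton_iff] at h
            exact h3.2 h
    · push_neg at hex
      obtain ⟨a0, ha0⟩ := hA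
      have hs₁U : UnivIn G C₁ s₁ := (hex a0 ha0) ▸ ha0
      have hs₁C : s₁ ∈ C₁ := hs₁U.1
      have hs₁x : s₁ ≠ x := by rintro rfl; exact hxC₁ hs₁C
      obtain ⟨d₁, hd₁ne, hd⟩ := hW2 s₁
      have hd₁x : d₁ = x := by
        by_contra hne
        rcases hd with hsing | hpair
        · exact singX d₁ hne hsing
        · obtain ⟨d₂, hd₂, hDom⟩ := hpair x (by
            rintro (h | h)
            · exact hs₁x h.symm
            · rw [Set.mem_singleton_iff] at h
              exact hne h.symm)
          have hd₂x : d₂ ≠ x := by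
            intro h
            exact hd₂ (by rw [h]; exact Or.inr (Or.inr rfl))
          obtain ⟨r, hr, hrU⟩ := keyPair d₁ d₂ hne hd₂x hDom
          have hrs : r = s₁ := hex r hrU
          rcases hr with rfl | rfl
          · exact hd₁ne hrs
          · exact hd₂ (by rw [hrs]; exact Or.inl rfl)
      subst hd₁x
      rcases hd with hsing | hpair
      · exact ⟨d₁, hd₁ne, Or.inl (L3 hsing)⟩
      · refine ⟨d₁, hd₁ne, Or.inr ?_⟩
        intro s₂ hs₂
        obtain ⟨d₂, hd₂, hDom⟩ := hpair s₂ hs₂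
        exact ⟨d₂, hd₂, L2 d₂ hDom⟩
  -- adjacency characterization inside C₂
  have hchar : ∀ c ∈ C₂, ∀ d ∈ C₂,
      (G.Adj c d ↔ c ≠ d ∧ (c = v ∨ c = w ∨ d = v ∨ d = w)) := by
    intro c hc d hd
    constructor
    · intro h
      refine ⟨G.ne_of_adj h, ?_⟩
      by_contra hcon
      push_neg at hcon
      exact hind c hc d hd hcon.1 hcon.2.1 hcon.2.2.1 hcon.2.2.2 h
    · rintro ⟨hne, (rfl | rfl | rfl | rfl)⟩
      · exact hvU d hd (Ne.symm hne)
      · exact hwU d hd (Ne.symm hne)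
      · exact (hvU c hc hne).symm
      · exact (hwU c hc hne).symm
  -- build the isomorphism
  haveI : Fintype ↥C₂ := (Set.toFinite C₂).fintype
  refine ⟨Fintype.card ↥C₂, ?_, ?_⟩
  · haveI : Nontrivial ↥C₂ :=
      ⟨⟨⟨v, hvC⟩, ⟨w, hwC⟩, by simp [Subtype.ext_iff]; exact hvw⟩⟩
    exact Fintype.one_lt_card
  have hm2 : 2 ≤ Fintype.card ↥C₂ := by
    haveI : Nontrivial ↥C₂ :=
      ⟨⟨⟨v, hvC⟩, ⟨w, hwC⟩, by simp [Subtype.ext_iff]; exact hvw⟩⟩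
    exact Fintype.one_lt_card
  obtain ⟨m, hm⟩ : ∃ m, Fintype.card ↥C₂ = m := ⟨_, rfl⟩
  rw [hm] at hm2 ⊢
  haveI : NeZero m := ⟨by omega⟩
  set vv : ↥C₂ := ⟨v, hvC⟩ with hvvdef
  set ww : ↥C₂ := ⟨w, hwC⟩ with hwwdef
  have hvvww : vv ≠ ww := by
    simp only [hvvdef, hwwdef, Ne, Subtype.ext_iff]
    exact hvw
  have h1val : (1 : Fin m).val = 1 := by
    rw [Fin.val_one']
    exact Nat.mod_eq_of_lt (by omega)
  have h01 : (0 : Fin m) ≠ 1 := by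
    intro h
    have := congrArg Fin.val h
    rw [Fin.val_zero, h1val] at this
    omega
  let e0 : Fin m ≃ ↥C₂ := ((Fintype.equivFin ↥C₂).trans (finCongr hm)).symm
  let e1 : Fin m ≃ ↥C₂ := (Equiv.swap (0 : Fin m) (e0.symm vv)).trans e0
  have he10 : e1 0 = vv := by
    show e0 (Equiv.swap (0 : Fin m) (e0.symm vv) 0) = vv
    rw [Equiv.swap_apply_left, Equiv.apply_symm_apply]
  let e2 : Fin m ≃ ↥C₂ := (Equiv.swap (1 : Fin m) (e1.symm ww)).trans e1
  have he21 : e2 1 = ww := by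
    show e1 (Equiv.swap (1 : Fin m) (e1.symm ww) 1) = ww
    rw [Equiv.swap_apply_left, Equiv.apply_symm_apply]
  have he20 : e2 0 = vv := by
    have hb : (0 : Fin m) ≠ e1.symm ww := by
      intro h
      apply hvvww
      rw [← he10, h, Equiv.apply_symm_apply]
    show e1 (Equiv.swap (1 : Fin m) (e1.symm ww) 0) = vv
    rw [Equiv.swap_apply_of_ne_of_ne h01 hb]
    exact he10
  have hval2 : ∀ p : Fin m, (p.val < 2 ↔ ((e2 p : V) = v ∨ (e2 p : V) = w)) := by
    intro p
    constructor
    · intro hp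
      have hp01 : p = 0 ∨ p = 1 := by
        rcases (by omega : p.val = 0 ∨ p.val = 1) with h | h
        · exact Or.inl (Fin.ext_iff.mpr (by rw [h, Fin.val_zero]))
        · exact Or.inr (Fin.ext_iff.mpr (by rw [h, h1val]))
      rcases hp01 with rfl | rfl
      · left; rw [he20]
      · right; rw [he21]
    · rintro (h | h)
      · have : p = 0 := e2.injective (by rw [he20]; exact Subtype.ext h)
        rw [this, Fin.val_zero]; omega
      · have : p = 1 := e2.injective (by rw [he21]; exact Subtype.ext h)
        rw [this, h1val]; omega
  have key : ∀ p q : Fin m,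
      (HGraph m).Adj p q ↔ (G.induce C₂).Adj (e2 p) (e2 q) := by
    intro p q
    rw [HGraph, SimpleGraph.fromRel_adj]
    have hindadj : (G.induce C₂).Adj (e2 p) (e2 q) ↔ G.Adj (e2 p : V) (e2 q : V) :=
      Iff.rfl
    rw [hindadj, hchar _ (e2 p).2 _ (e2 q).2]
    constructor
    · rintro ⟨hpq, hlt⟩
      refine ⟨fun h => hpq (e2.injective (Subtype.ext h)), ?_⟩
      rcases hlt with h | h
      · rcases (hval2 p).mp h with h' | h'
        · exact Or.inl h'
        · exact Or.inr (Or.inl h')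
      · rcases (hval2 q).mp h with h' | h'
        · exact Or.inr (Or.inr (Or.inl h'))
        · exact Or.inr (Or.inr (Or.inr h'))
    · rintro ⟨hne, hor⟩
      refine ⟨?_, ?_⟩
      · intro h
        exact hne (congrArg (fun z => ((e2 z : ↥C₂) : V)) h)
      · rcases hor with h | h | h | h
        · exact Or.inl ((hval2 p).mpr (Or.inl h))
        · exact Or.inl ((hval2 p).mpr (Or.inr h))
        · exact Or.inr ((hval2 q).mpr (Or.inl h))
        · exact Or.inr ((hval2 q).mpr (Or.inr h))
  refine ⟨⟨e2.symm, ?_⟩⟩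
  intro a b
  rw [key (e2.symm a) (e2.symm b), e2.apply_symm_apply, e2.apply_symm_apply]
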